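/- arXiv:1709.01625 — 2 statements merged into one kernel-verified Lean document; each statement's English description precedes it below -/
import Mathlib

section
/- Let S ⊂ ℝ^n be a nonempty finite set, A an m×n real matrix, b ∈ ℝ^m, and c ∈ ℝ^n. Assume there exists x in the convex hull of S with A x ≥ b (componentwise). Then the Lagrangian dual value equals the value of the linear program over the convex hull: sup_{λ ∈ ℝ^m, λ ≥ 0} min_{x ∈ S} ( ⟨c, x⟩ − ⟨λ, A x − b⟩ ) = min { ⟨c, x⟩ : x ∈ convexHull(S), A x ≥ b }. -/
/-!
Weak duality: for `λ ≥ 0` the Lagrangian is affine in `x`, so its minimum over `S` is its minimum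
over `conv S`, which is at most `⟨c, x⟩` at every feasible `x`.

Strong duality: for `t` below the value of the linear program, the compact convex image of `conv S`
under `x ↦ (A x, ⟨c, x⟩)` misses the closed convex set `{(z, r) | b ≤ z, r ≤ t}`. A functional
`(z, r) ↦ ⟨α, z⟩ + β r` separating them strictly has `α ≥ 0` and `β ≤ 0` because the second set is
unbounded in those directions, and `β ≠ 0` because some point of the image satisfies `b ≤ z`.
Then `λ = α / (-β)` is a multiplier with dual value above `t`.
-/

open Matrix Set

lemma nonneg_of_forall_lt_add_mul {𝕜 : Type*} [Field 𝕜] [LinearOrder 𝕜] [IsStrictOrderedRing 𝕜]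
    {a k w : 𝕜} (h : ∀ s, 0 ≤ s → w < a + s * k) : 0 ≤ k := by
  by_contra! hk
  have hwa : 0 < a - w := by linarith [h 0 le_rfl]
  have := h ((a - w) / -k) (div_nonneg hwa.le (neg_nonneg.2 hk.le))
  rw [div_mul_eq_mul_div, div_neg, mul_div_cancel_right₀ _ hk.ne] at this
  linarith

lemma LinearMap.exists_apply_prod_eq_dotProduct_add_mul {ι : Type*} [Fintype ι]
    (f : (ι → ℝ) × ℝ →ₗ[ℝ] ℝ) : ∃ (α : ι → ℝ) (β : ℝ), ∀ z r, f (z, r) = α ⬝ᵥ z + β * r := by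
  classical
  refine ⟨(dotProductEquiv ℝ ι).symm (f ∘ₗ LinearMap.inl ℝ _ ℝ), f (0, 1), fun z r => ?_⟩
  have hz : f (z, 0) = (dotProductEquiv ℝ ι).symm (f ∘ₗ LinearMap.inl ℝ _ ℝ) ⬝ᵥ z := by
    rw [← dotProductEquiv_apply_apply, LinearEquiv.apply_symm_apply]; rfl
  have hr : f (0, r) = f (0, 1) * r := by
    rw [mul_comm, ← smul_eq_mul, ← map_smul, Prod.smul_mk, smul_zero, smul_eq_mul, mul_one]
  rw [← hz, ← hr, ← map_add, Prod.mk_add_mk, add_zero, zero_add]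

theorem exists_lagrangeMultiplier_of_isCompact {ι : Type*} [Fintype ι]
    {M : Set ((ι → ℝ) × ℝ)} (hconv : Convex ℝ M) (hcomp : IsCompact M) {b : ι → ℝ} {t : ℝ}
    (hfeas : ∃ p ∈ M, b ≤ p.1) (hlt : ∀ p ∈ M, b ≤ p.1 → t < p.2) :
    ∃ lam : ι → ℝ, 0 ≤ lam ∧ ∀ p ∈ M, t < p.2 - lam ⬝ᵥ (p.1 - b) := by
  classical
  obtain ⟨f, u, w, hfM, huw, hfP⟩ := geometric_hahn_banach_compact_closed hconv hcomp
    ((convex_Ici b).prod (convex_Iic t)) (isClosed_Ici.prod isClosed_Iic)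
    (disjoint_left.2 fun p hpM hpP => (hlt p hpM hpP.1).not_ge hpP.2)
  obtain ⟨α, β, hf⟩ := (f : (ι → ℝ) × ℝ →ₗ[ℝ] ℝ).exists_apply_prod_eq_dotProduct_add_mul
  have hM : ∀ p ∈ M, α ⬝ᵥ p.1 + β * p.2 < u := fun p hp => hf p.1 p.2 ▸ hfM p hp
  have hP : ∀ z r, b ≤ z → r ≤ t → w < α ⬝ᵥ z + β * r := fun z r hz hr => hf z r ▸ hfP _ ⟨hz, hr⟩
  have hα : 0 ≤ α := fun j =>
    nonneg_of_forall_lt_add_mul (w := w) (a := α ⬝ᵥ b + β * t) fun s hs => by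
      have := hP (b + s • Pi.single j 1) t
        (le_add_of_nonneg_right (smul_nonneg hs (Pi.single_nonneg.2 zero_le_one))) le_rfl
      rw [dotProduct_add, dotProduct_smul, dotProduct_single, mul_one, smul_eq_mul] at this
      linarith
  have hβ : β < 0 := by
    have hβle : 0 ≤ -β := nonneg_of_forall_lt_add_mul (w := w) (a := α ⬝ᵥ b + β * t)
      fun s hs => by linarith [hP b (t - s) le_rfl (by linarith)]
    obtain ⟨p₀, hp₀M, hp₀⟩ := hfeas
    refine (neg_nonneg.1 hβle).lt_of_ne fun hβ0 => ?_
    have h₁ := hM p₀ hp₀M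
    have h₂ := hP p₀.1 t hp₀ le_rfl
    rw [hβ0, zero_mul, add_zero] at h₁ h₂
    linarith
  refine ⟨(-β)⁻¹ • α, smul_nonneg (inv_nonneg.2 (by linarith)) hα, fun p hp => ?_⟩
  have key : α ⬝ᵥ (p.1 - b) < -β * (p.2 - t) := by
    rw [dotProduct_sub]
    linarith [hM p hp, hP b t le_rfl le_rfl]
  rw [smul_dotProduct, smul_eq_mul, lt_sub_comm, inv_mul_lt_iff₀ (by linarith)]
  exact key

lemma ConcaveOn.ciInf_le_of_mem_convexHull {E : Type*} [AddCommGroup E] [Module ℝ E]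
    {s : Set E} {S : Finset E} {f : E → ℝ} (hf : ConcaveOn ℝ s f) (hS : ↑S ⊆ s) {x : E}
    (hx : x ∈ convexHull ℝ (S : Set E)) : ⨅ y : S, f y ≤ f x := by
  obtain ⟨y, hy, hyx⟩ := hf.exists_le_of_mem_convexHull hS hx
  exact (ciInf_le (finite_range _).bddBelow ⟨y, hy⟩).trans hyx

section Lagrangian

variable {ι κ : Type*} [Fintype ι] [Fintype κ] (A : Matrix ι κ ℝ) (b : ι → ℝ) (c : κ → ℝ)

def lagrangian (lam : ι → ℝ) (x : κ → ℝ) : ℝ := c ⬝ᵥ x - lam ⬝ᵥ (A *ᵥ x - b)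

lemma lagrangian_eq_dotProduct_add (lam : ι → ℝ) (x : κ → ℝ) :
    lagrangian A b c lam x = (c - lam ᵥ* A) ⬝ᵥ x + lam ⬝ᵥ b := by
  rw [lagrangian, dotProduct_sub, dotProduct_mulVec, sub_dotProduct]
  ring

lemma concaveOn_lagrangian (lam : ι → ℝ) : ConcaveOn ℝ univ (lagrangian A b c lam) := by
  rw [funext (lagrangian_eq_dotProduct_add A b c lam)]
  exact ((dotProductBilin ℝ ℝ (c - lam ᵥ* A)).concaveOn convex_univ).add_const _

lemma iInf_lagrangian_le_of_mem_convexHull (S : Finset (κ → ℝ)) {lam : ι → ℝ} (hlam : 0 ≤ lam)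
    {x : κ → ℝ} (hx : x ∈ convexHull ℝ (S : Set (κ → ℝ))) (hAx : b ≤ A *ᵥ x) :
    ⨅ s : S, lagrangian A b c lam s ≤ c ⬝ᵥ x :=
  calc ⨅ s : S, lagrangian A b c lam s ≤ lagrangian A b c lam x :=
        (concaveOn_lagrangian A b c lam).ciInf_le_of_mem_convexHull (subset_univ _) hx
    _ ≤ c ⬝ᵥ x := sub_le_self _ (dotProduct_nonneg_of_nonneg hlam (sub_nonneg.2 hAx))

end Lagrangian

theorem geoffrion_lagrangian_dual_general {m n : ℕ} (S : Finset (Fin n → ℝ))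
    (A : Matrix (Fin m) (Fin n) ℝ) (b : Fin m → ℝ) (c : Fin n → ℝ)
    (hfeas : ∃ x ∈ convexHull ℝ (S : Set (Fin n → ℝ)), ∀ j, b j ≤ ∑ i, A j i * x i) :
    (⨆ lam : {lam : Fin m → ℝ // ∀ j, 0 ≤ lam j},
        ⨅ x : S,
          ((∑ i, c i * (x : Fin n → ℝ) i)
            - ∑ j, lam.1 j * ((∑ i, A j i * (x : Fin n → ℝ) i) - b j))) =
    ⨅ x : {x : Fin n → ℝ //
        x ∈ convexHull ℝ (S : Set (Fin n → ℝ)) ∧ ∀ j, b j ≤ ∑ i, A j i * x i},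
      ∑ i, c i * x.1 i := by
  change (⨆ lam : {lam : Fin m → ℝ // 0 ≤ lam}, ⨅ x : S, lagrangian A b c lam x) =
    ⨅ x : {x // x ∈ convexHull ℝ (S : Set (Fin n → ℝ)) ∧ b ≤ A *ᵥ x}, c ⬝ᵥ x.1
  set K := convexHull ℝ (S : Set (Fin n → ℝ))
  obtain ⟨x₀, hx₀, hAx₀⟩ := hfeas
  have : Nonempty S := (convexHull_nonempty_iff.1 ⟨x₀, hx₀⟩).to_subtype
  have : Nonempty {x // x ∈ K ∧ b ≤ A *ᵥ x} := ⟨⟨x₀, hx₀, hAx₀⟩⟩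
  have : Nonempty {lam : Fin m → ℝ // 0 ≤ lam} := ⟨⟨0, le_rfl⟩⟩
  have weak (lam : {lam : Fin m → ℝ // 0 ≤ lam}) :
      ⨅ s : S, lagrangian A b c lam s ≤ ⨅ x : {x // x ∈ K ∧ b ≤ A *ᵥ x}, c ⬝ᵥ x.1 :=
    le_ciInf fun x => iInf_lagrangian_le_of_mem_convexHull A b c S lam.2 x.2.1 x.2.2
  have hbdd : BddBelow (range fun x : {x // x ∈ K ∧ b ≤ A *ᵥ x} => c ⬝ᵥ x.1) :=
    ⟨_, forall_mem_range.2 fun x =>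
      iInf_lagrangian_le_of_mem_convexHull A b c S le_rfl x.2.1 x.2.2⟩
  refine le_antisymm (ciSup_le weak) (le_of_forall_lt_imp_le_of_dense fun t ht => ?_)
  let L := (mulVecLin A).prod (dotProductBilin ℝ ℝ c)
  obtain ⟨lam, hlam, hlt⟩ := exists_lagrangeMultiplier_of_isCompact
    ((convex_convexHull ℝ _).linear_image L)
    ((S.finite_toSet.isCompact_convexHull ℝ).image L.continuous_of_finiteDimensional)
    ⟨L x₀, mem_image_of_mem L hx₀, hAx₀⟩
    (forall_mem_image.2 fun x hx hAx => ht.trans_le (ciInf_le hbdd ⟨x, hx, hAx⟩))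
  calc t ≤ ⨅ s : S, lagrangian A b c lam s :=
        le_ciInf fun s => (hlt (L s) (mem_image_of_mem L (subset_convexHull ℝ _ s.2))).le
    _ ≤ _ := le_ciSup ⟨_, forall_mem_range.2 weak⟩ ⟨lam, hlam⟩

/-- Geoffrion: For a nonempty finite set `S ⊂ ℝ^n`, matrix `A`,
vectors `b, c`, if some point of the convex hull of `S` satisfies `A x ≥ b`,
then the Lagrangian dual value equals the value of the LP over the convex hull:
`sup_{λ ≥ 0} min_{x∈S} (⟨c,x⟩ − ⟨λ, Ax − b⟩) = min {⟨c,x⟩ : x ∈ conv(S), Ax ≥ b}`. -/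
theorem geoffrion_lagrangian_dual {m n : ℕ} (S : Finset (Fin n → ℝ)) (hS : S.Nonempty)
    (A : Matrix (Fin m) (Fin n) ℝ) (b : Fin m → ℝ) (c : Fin n → ℝ)
    (hfeas : ∃ x ∈ convexHull ℝ (S : Set (Fin n → ℝ)), ∀ j, b j ≤ ∑ i, A j i * x i) :
    (⨆ lam : {lam : Fin m → ℝ // ∀ j, 0 ≤ lam j},
        ⨅ x : S,
          ((∑ i, c i * (x : Fin n → ℝ) i)
            - ∑ j, lam.1 j * ((∑ i, A j i * (x : Fin n → ℝ) i) - b j))) =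
    ⨅ x : {x : Fin n → ℝ //
        x ∈ convexHull ℝ (S : Set (Fin n → ℝ)) ∧ ∀ j, b j ≤ ∑ i, A j i * x i},
      ∑ i, c i * x.1 i :=
  geoffrion_lagrangian_dual_general S A b c hfeas
end

section
/- Consider the linear program over variables ν = (ν₀₀, ν₀₁, ν₁₀, ν₁₁) ∈ ℝ⁴: minimize 10(ν₀₁ + ν₁₀ + ν₁₁) subject to ν ≥ 0, ν₀₀ + ν₀₁ + ν₁₀ + ν₁₁ = 1, and (ν₀₀ + ν₀₁) + (ν₀₀ + ν₁₀) ≤ 1. Then (a) the optimal value is 5, attained at the fractional point ν₀₀ = ν₁₁ = 1/2, ν₀₁ = ν₁₀ = 0; and (b) every feasible point with all coordinates in {0,1} has objective value at least 10. Hence the Lagrangian/LP relaxation of the second-best MAP problem with Hamming (dot-product) dissimilarity is not tight. -/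
/-!
On the simplex the objective is `c (1 - ν₀₀)`, and the Hamming constraint
`2 ν₀₀ + ν₀₁ + ν₁₀ ≤ 1` forces `ν₀₀ ≤ 1/2`; so the relaxation has value `c / 2`, reached by
splitting the mass evenly between the MAP labelling `(0,0)` and `(1,1)`. At an integral point
`ν₀₀ ∈ {0, 1}`, so the same bound gives `ν₀₀ = 0` and the cost is the full `c`.
-/

namespace SecondBestLP

/-- `νᵢⱼ` is the mass on the joint label `(i, j)`; the last constraint is `μ₁(0) + μ₂(0) ≤ 1`. -/
def Feasible (v00 v01 v10 v11 : ℝ) : Prop :=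
  0 ≤ v00 ∧ 0 ≤ v01 ∧ 0 ≤ v10 ∧ 0 ≤ v11 ∧
    v00 + v01 + v10 + v11 = 1 ∧ (v00 + v01) + (v00 + v10) ≤ 1

/-- The energy of the edge distribution when every labelling other than `(0,0)` costs `c`. -/
def objective (c : ℝ) (_v00 v01 v10 v11 : ℝ) : ℝ := c * (v01 + v10 + v11)

variable {c v00 v01 v10 v11 : ℝ}

theorem Feasible.objective_eq (h : Feasible v00 v01 v10 v11) :
    objective c v00 v01 v10 v11 = c * (1 - v00) := by
  obtain ⟨-, -, -, -, hsum, -⟩ := h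
  unfold objective
  rw [← hsum]
  ring

theorem Feasible.le_half (h : Feasible v00 v01 v10 v11) : v00 ≤ 1 / 2 := by
  obtain ⟨-, h01, h10, -, -, hham⟩ := h
  linarith

theorem Feasible.half_le_objective (hc : 0 ≤ c) (h : Feasible v00 v01 v10 v11) :
    c / 2 ≤ objective c v00 v01 v10 v11 := by
  rw [h.objective_eq]
  nlinarith [h.le_half]

theorem feasible_half : Feasible (1 / 2) 0 0 (1 / 2) := by
  unfold Feasible
  norm_num

theorem objective_half : objective c (1 / 2) 0 0 (1 / 2) = c / 2 := by
  unfold objective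
  ring

theorem isLeast_objective (hc : 0 ≤ c) :
    IsLeast {y | ∃ v00 v01 v10 v11, Feasible v00 v01 v10 v11 ∧ y = objective c v00 v01 v10 v11}
      (c / 2) :=
  ⟨⟨1 / 2, 0, 0, 1 / 2, feasible_half, objective_half.symm⟩,
    fun _ ⟨_, _, _, _, h, hy⟩ => hy ▸ h.half_le_objective hc⟩

theorem Feasible.objective_eq_of_integral (h : Feasible v00 v01 v10 v11)
    (h00 : v00 = 0 ∨ v00 = 1) : objective c v00 v01 v10 v11 = c := by
  have hv00 : v00 = 0 := h00.resolve_right fun h1 => by linarith [h.le_half]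
  rw [h.objective_eq, hv00, sub_zero, mul_one]

end SecondBestLP

open SecondBestLP in
/-- The LP `min 10(ν₀₁+ν₁₀+ν₁₁)` s.t. `ν ≥ 0`, `Σν = 1`,
`(ν₀₀+ν₀₁) + (ν₀₀+ν₁₀) ≤ 1` has optimal value 5, attained at the fractional
point `ν₀₀ = ν₁₁ = 1/2`, while every feasible 0-1 point has objective ≥ 10:
the Lagrangian/LP relaxation of second-best MAP with Hamming dissimilarity
is not tight. -/
theorem second_best_lp_not_tight
    (feasible : ℝ → ℝ → ℝ → ℝ → Prop)
    (hfeas : feasible = fun v00 v01 v10 v11 =>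
      0 ≤ v00 ∧ 0 ≤ v01 ∧ 0 ≤ v10 ∧ 0 ≤ v11 ∧
      v00 + v01 + v10 + v11 = 1 ∧ (v00 + v01) + (v00 + v10) ≤ 1)
    (obj : ℝ → ℝ → ℝ → ℝ → ℝ)
    (hobj : obj = fun _ v01 v10 v11 => 10 * (v01 + v10 + v11)) :
    (IsLeast {y : ℝ | ∃ v00 v01 v10 v11,
        feasible v00 v01 v10 v11 ∧ y = obj v00 v01 v10 v11} 5 ∧
      feasible (1/2) 0 0 (1/2) ∧ obj (1/2) 0 0 (1/2) = 5) ∧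
    (∀ v00 v01 v10 v11, feasible v00 v01 v10 v11 →
      (v00 = 0 ∨ v00 = 1) → (v01 = 0 ∨ v01 = 1) →
      (v10 = 0 ∨ v10 = 1) → (v11 = 0 ∨ v11 = 1) →
      10 ≤ obj v00 v01 v10 v11) := by
  subst hfeas hobj
  have hfive : (10 : ℝ) / 2 = 5 := by norm_num
  refine ⟨⟨hfive ▸ isLeast_objective (by norm_num), feasible_half, hfive ▸ objective_half⟩, ?_⟩
  intro v00 v01 v10 v11 h h00 _ _ _
  exact (Feasible.objective_eq_of_integral (c := 10) h h00).ge
end
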